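/- arXiv:1402.3408 — 3 statements merged into one kernel-verified Lean document; each statement's English description precedes it below -/
import Mathlib

section
/- In a generalized group, every element has a unique inverse. -/
/-
An inverse s of t shares its identity with t: e t and e s are mutually absorbing, so the
uniqueness of identities forces e s = e (e t) = e t. Two inverses s, s' of t then agree by the
usual group computation s = s (t s') = (s t) s' = s'.
-/

universe u v

structure GenGroup (T : Type u) where
  mul : T → T → T
  mul_assoc : ∀ a b c : T, mul (mul a b) c = mul a (mul b c)
  e : T → T
  mul_e : ∀ t, mul t (e t) = t
  e_mul : ∀ t, mul (e t) t = t
  e_unique : ∀ t u : T, mul t u = t → mul u t = t → u = e t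
  inv : T → T
  mul_inv : ∀ t, mul t (inv t) = e t
  inv_mul : ∀ t, mul (inv t) t = e t

namespace GenGroup

variable {T : Type u} (G : GenGroup T)

def IsInverse (t s : T) : Prop :=
  G.mul s t = G.e t ∧ G.mul t s = G.e t

theorem isInverse_inv (t : T) : G.IsInverse t (G.inv t) :=
  ⟨G.inv_mul t, G.mul_inv t⟩

theorem e_mul_e_self (t : T) : G.mul (G.e t) (G.e t) = G.e t :=
  calc G.mul (G.e t) (G.e t) = G.mul (G.mul (G.e t) t) (G.inv t) := by
        rw [G.mul_assoc, G.mul_inv]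
    _ = G.e t := by rw [G.e_mul, G.mul_inv]

theorem e_e (t : T) : G.e (G.e t) = G.e t :=
  (G.e_unique _ _ (G.e_mul_e_self t) (G.e_mul_e_self t)).symm

variable {G}

theorem IsInverse.e_eq {t s : T} (h : G.IsInverse t s) : G.e s = G.e t := by
  have h_left : G.mul (G.e t) (G.e s) = G.e t := by
    rw [← h.2, G.mul_assoc, G.mul_e]
  have h_right : G.mul (G.e s) (G.e t) = G.e t := by
    rw [← h.1, ← G.mul_assoc, G.e_mul]
  rw [G.e_unique _ _ h_left h_right, G.e_e]

theorem IsInverse.eq {t s s' : T} (h : G.IsInverse t s) (h' : G.IsInverse t s') : s = s' :=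
  calc s = G.mul s (G.e s) := (G.mul_e s).symm
    _ = G.mul s (G.mul t s') := by rw [h.e_eq, h'.2]
    _ = G.mul (G.mul s t) s' := (G.mul_assoc ..).symm
    _ = G.mul (G.e s') s' := by rw [h.1, h'.e_eq]
    _ = s' := G.e_mul s'

end GenGroup

theorem unique_inverse {T : Type u} (G : GenGroup T) (t : T) :
    ∃! s : T, G.mul s t = G.e t ∧ G.mul t s = G.e t :=
  ⟨G.inv t, G.isInverse_inv t, fun _ hs => GenGroup.IsInverse.eq hs (G.isInverse_inv t)⟩
end

section
/- Let (X, T, λ) be a T-space with T compact and λ perfect (e(t)·x = x for all t, x). Then λ : T × X → X is a closed map. -/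
/-! The shear `(t, x) ↦ (t, t • x)` is a homeomorphism of `T × X`, with inverse
`(t, y) ↦ (t, t⁻¹ • y)` because the action is perfect. So the action is the projection
`T × X → X` precomposed with a homeomorphism, and that projection is closed since `T` is compact. -/

universe u v

structure GenAction {T : Type u} (G : GenGroup T) (X : Type v) where
  act : T → X → X
  act_mul : ∀ s t x, act s (act t x) = act (G.mul s t) x
  act_e : ∀ x : X, ∃ t : T, act (G.e t) x = x

namespace GenAction

variable {T : Type u} {X : Type v} {G : GenGroup T}

def IsPerfect (A : GenAction G X) : Prop :=
  ∀ (t : T) (x : X), A.act (G.e t) x = x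

theorem IsPerfect.act_inv_act {A : GenAction G X} (hA : A.IsPerfect) (t : T) (x : X) :
    A.act (G.inv t) (A.act t x) = x := by
  rw [A.act_mul, G.inv_mul, hA]

theorem IsPerfect.act_act_inv {A : GenAction G X} (hA : A.IsPerfect) (t : T) (x : X) :
    A.act t (A.act (G.inv t) x) = x := by
  rw [A.act_mul, G.mul_inv, hA]

variable [TopologicalSpace T] [TopologicalSpace X]

def shearHomeomorph (A : GenAction G X) (hA : A.IsPerfect) (hinv : Continuous G.inv)
    (hact : Continuous fun p : T × X => A.act p.1 p.2) : T × X ≃ₜ T × X where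
  toFun p := (p.1, A.act p.1 p.2)
  invFun p := (p.1, A.act (G.inv p.1) p.2)
  left_inv p := Prod.ext rfl (hA.act_inv_act p.1 p.2)
  right_inv p := Prod.ext rfl (hA.act_act_inv p.1 p.2)
  continuous_toFun := continuous_fst.prodMk hact
  continuous_invFun :=
    continuous_fst.prodMk (hact.comp ((hinv.comp continuous_fst).prodMk continuous_snd))

end GenAction

theorem action_closed_map_general {T : Type u} {X : Type v}
    [TopologicalSpace T] [CompactSpace T]
    [TopologicalSpace X]
    (G : GenGroup T)
    (hinv : Continuous G.inv)
    (A : GenAction G X)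
    (hact : Continuous fun p : T × X => A.act p.1 p.2)
    (hperf : ∀ (t : T) (x : X), A.act (G.e t) x = x) :
    IsClosedMap fun p : T × X => A.act p.1 p.2 := by
  change IsClosedMap (Prod.snd ∘ A.shearHomeomorph hperf hinv hact)
  exact isClosedMap_snd_of_compactSpace.comp (A.shearHomeomorph hperf hinv hact).isClosedMap

theorem action_closed_map {T : Type u} {X : Type v}
    [TopologicalSpace T] [T2Space T] [CompactSpace T]
    [TopologicalSpace X] [T2Space X]
    (G : GenGroup T)
    (hmul : Continuous fun p : T × T => G.mul p.1 p.2)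
    (hinv : Continuous G.inv)
    (he : ∀ s t : T, G.e (G.mul s t) = G.mul (G.e s) (G.e t))
    (A : GenAction G X)
    (hact : Continuous fun p : T × X => A.act p.1 p.2)
    (hperf : ∀ (t : T) (x : X), A.act (G.e t) x = x) :
    IsClosedMap fun p : T × X => A.act p.1 p.2 :=
  action_closed_map_general G hinv A hact hperf
end

section
/- Let (X, T, λ) be a T-space with T compact and λ perfect. Then the quotient space X/T (orbits of the action, with quotient topology) is Hausdorff. -/
/-!
Each translation `A.act t` is continuous, and with a perfect action the orbit relation is an
equivalence whose saturation of an open set `U` is `⋃ t, (A.act t)⁻¹' U`; hence the quotient map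
is open, and `X/T` is Hausdorff as soon as the graph of the orbit relation is closed in `X × X`.
That graph is the projection along the compact factor `T` of the closed set
`{(t, x, y) | A.act t x = y}` of `T × X × X`, so it is closed.
-/

universe u v

namespace GenAction

variable {T : Type u} {X : Type v} {G : GenGroup T} (A : GenAction G X)

def OrbitRel (x y : X) : Prop :=
  ∃ t : T, A.act t x = y

theorem orbitRel_equivalence (hperf : ∀ (t : T) (x : X), A.act (G.e t) x = x) :
    Equivalence A.OrbitRel where
  refl x := let ⟨t, ht⟩ := A.act_e x; ⟨G.e t, ht⟩
  symm := by
    rintro x _ ⟨t, rfl⟩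
    exact ⟨G.inv t, by rw [A.act_mul, G.inv_mul, hperf]⟩
  trans := by
    rintro x _ _ ⟨s, rfl⟩ ⟨t, rfl⟩
    exact ⟨G.mul t s, (A.act_mul t s x).symm⟩

theorem quot_mk_eq_iff (hperf : ∀ (t : T) (x : X), A.act (G.e t) x = x) (x y : X) :
    Quot.mk A.OrbitRel x = Quot.mk A.OrbitRel y ↔ A.OrbitRel x y :=
  (A.orbitRel_equivalence hperf).quot_mk_eq_iff x y

theorem preimage_image_quot_mk (hperf : ∀ (t : T) (x : X), A.act (G.e t) x = x) (U : Set X) :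
    Quot.mk A.OrbitRel ⁻¹' (Quot.mk A.OrbitRel '' U) = ⋃ t, A.act t ⁻¹' U := by
  ext y
  simp only [Set.mem_preimage, Set.mem_image, Set.mem_iUnion, A.quot_mk_eq_iff hperf]
  constructor
  · rintro ⟨x, hxU, hyx⟩
    obtain ⟨t, rfl⟩ := (A.orbitRel_equivalence hperf).symm hyx
    exact ⟨t, hxU⟩
  · rintro ⟨t, ht⟩
    exact ⟨A.act t y, ht, (A.orbitRel_equivalence hperf).symm ⟨t, rfl⟩⟩

variable [TopologicalSpace X]

theorem isOpenQuotientMap_quot_mk (hperf : ∀ (t : T) (x : X), A.act (G.e t) x = x)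
    (hact : ∀ t, Continuous (A.act t)) : IsOpenQuotientMap (Quot.mk A.OrbitRel) := by
  refine ⟨Quot.exists_rep, continuous_quot_mk, fun U hU => ?_⟩
  rw [isOpen_coinduced, A.preimage_image_quot_mk hperf]
  exact isOpen_iUnion fun t => hU.preimage (hact t)

theorem isClosed_setOf_orbitRel [TopologicalSpace T] [CompactSpace T] [T2Space X]
    (hact : Continuous fun p : T × X => A.act p.1 p.2) :
    IsClosed {p : X × X | A.OrbitRel p.1 p.2} := by
  have hgraph : IsClosed {q : T × (X × X) | A.act q.1 q.2.1 = q.2.2} :=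
    isClosed_eq (hact.comp (continuous_fst.prodMk continuous_snd.fst)) continuous_snd.snd
  have hproj : {p : X × X | A.OrbitRel p.1 p.2} =
      Prod.snd '' {q : T × (X × X) | A.act q.1 q.2.1 = q.2.2} := by
    ext ⟨x, y⟩
    simp [OrbitRel]
  rw [hproj]
  exact isClosedMap_snd_of_compactSpace _ hgraph

end GenAction

theorem quotient_t2_general {T : Type u} {X : Type v}
    [TopologicalSpace T] [CompactSpace T]
    [TopologicalSpace X] [T2Space X]
    (G : GenGroup T)
    (A : GenAction G X)
    (hact : Continuous fun p : T × X => A.act p.1 p.2)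
    (hperf : ∀ (t : T) (x : X), A.act (G.e t) x = x) :
    T2Space (Quot fun x y : X => ∃ t : T, A.act t x = y) := by
  have hπ : IsOpenQuotientMap (Quot.mk A.OrbitRel) :=
    A.isOpenQuotientMap_quot_mk hperf fun t => hact.comp (Continuous.prodMk_right t)
  refine (t2Space_iff_of_isOpenQuotientMap hπ).2 ?_
  simpa only [A.quot_mk_eq_iff hperf] using A.isClosed_setOf_orbitRel hact

theorem quotient_t2 {T : Type u} {X : Type v}
    [TopologicalSpace T] [T2Space T] [CompactSpace T]
    [TopologicalSpace X] [T2Space X]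
    (G : GenGroup T)
    (hmul : Continuous fun p : T × T => G.mul p.1 p.2)
    (hinv : Continuous G.inv)
    (he : ∀ s t : T, G.e (G.mul s t) = G.mul (G.e s) (G.e t))
    (A : GenAction G X)
    (hact : Continuous fun p : T × X => A.act p.1 p.2)
    (hperf : ∀ (t : T) (x : X), A.act (G.e t) x = x) :
    T2Space (Quot fun x y : X => ∃ t : T, A.act t x = y) :=
  quotient_t2_general G A hact hperf
end
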